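/- Let (X,d) be a metric space, M a nonempty proper closed subset of X, and F : X∖M → (0,∞) a 1-Lipschitz function. Then the generalized Nikolov–Andreev metric i(x,y) = 2·log((F(x) + F(y) + d(x,y)) / (2·√(F(x)·F(y)))) on X∖M is Gromov hyperbolic with Gromov constant δ ≤ log 9: for all x,y,z,w ∈ X∖M, i(x,z) + i(y,w) ≤ max{ i(x,w) + i(y,z), i(x,y) + i(z,w) } + 2·log 9. -/
import Mathlib

lemma quad (u v w p q : ℝ) (hu : 0 < u) (huv : u ≤ v) (huw : u ≤ w) (hq : 0 ≤ q)
    (hp : p ≤ v + u) (hq' : q ≤ u + w) : p * q ≤ 4 * (v * w) := by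
  nlinarith [mul_le_mul hp hq' hq (by linarith : (0:ℝ) ≤ v + u),
    mul_nonneg (sub_nonneg.2 huv) (sub_nonneg.2 huw)]

lemma key9 (a b c e p q : ℝ) (ha : 0 < a) (hb : 0 < b) (hc : 0 < c) (he : 0 < e)
    (hq : 0 < q) (hp1 : p ≤ a + b) (hp2 : p ≤ e + c) (hq1 : q ≤ a + e) (hq2 : q ≤ b + c) :
    p * q ≤ 9 * max (e * b) (a * c) := by
  have hm1 : e * b ≤ max (e * b) (a * c) := le_max_left _ _
  have hm2 : a * c ≤ max (e * b) (a * c) := le_max_right _ _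
  have hmpos : 0 < max (e * b) (a * c) := lt_of_lt_of_le (by positivity) hm2
  rcases le_total a b with hab | hba
  · rcases le_total c e with hce | hec
    · rcases le_total a c with hac | hca
      · -- a min
        have := quad a b e p q ha hab (hac.trans hce) hq.le (by linarith) hq1
        nlinarith
      · -- c min
        have := quad c e b p q hc hce (hca.trans hab) hq.le hp2 (by linarith)
        nlinarith
    · rcases le_total a e with hae | hea
      · -- a min
        have := quad a b e p q ha hab hae hq.le (by linarith) hq1
        nlinarith
      · -- e min
        have := quad e c a p q he hec hea hq.le (by linarith) (by linarith)
        nlinarith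
  · rcases le_total c e with hce | hec
    · rcases le_total b c with hbc | hcb
      · -- b min
        have := quad b a c p q hb hba hbc hq.le (by linarith) hq2
        nlinarith
      · -- c min
        have := quad c e b p q hc hce hcb hq.le hp2 (by linarith)
        nlinarith
    · rcases le_total b e with hbe | heb
      · -- b min
        have := quad b a c p q hb hba (hbe.trans hec) hq.le (by linarith) hq2
        nlinarith
      · -- e min
        have := quad e c a p q he hec (heb.trans hba) hq.le (by linarith) (by linarith)
        nlinarith

open Real Filter

/-- Generalized Nikolov–Andreev function. -/
noncomputable def iNA {X : Type*} [MetricSpace X] (F : X → ℝ) (x y : X) : ℝ :=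
  2 * Real.log ((F x + F y + dist x y) / (2 * Real.sqrt (F x * F y)))

theorem stmt_11 {X : Type*} [MetricSpace X] (M : Set X)
    (hMclosed : IsClosed M) (hMne : M.Nonempty) (hMproper : M ≠ Set.univ)
    (F : X → ℝ) (hFpos : ∀ x ∉ M, 0 < F x)
    (hFlip : ∀ x ∉ M, ∀ y ∉ M, |F x - F y| ≤ dist x y) :
    ∀ x ∉ M, ∀ y ∉ M, ∀ z ∉ M, ∀ w ∉ M,
      iNA F x z + iNA F y w ≤
        max (iNA F x w + iNA F y z) (iNA F x y + iNA F z w) + 2 * Real.log 9 := by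
  intro x hx y hy z hz w hw
  have hFx := hFpos x hx
  have hFy := hFpos y hy
  have hFz := hFpos z hz
  have hFw := hFpos w hw
  have expand : ∀ u v : X, 0 < F u → 0 < F v →
      iNA F u v = 2 * Real.log (F u + F v + dist u v)
        - 2 * Real.log 2 - Real.log (F u) - Real.log (F v) := by
    intro u v hu hv
    have hd : (0:ℝ) ≤ dist u v := dist_nonneg
    have hA : 0 < F u + F v + dist u v := by linarith
    unfold iNA
    rw [Real.log_div hA.ne' (by positivity), Real.log_mul two_ne_zero (by positivity),
      Real.log_sqrt (by positivity), Real.log_mul hu.ne' hv.ne']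
    ring
  -- A-values
  set Axz := F x + F z + dist x z with hAxz
  set Ayw := F y + F w + dist y w with hAyw
  set Axw := F x + F w + dist x w with hAxw
  set Ayz := F y + F z + dist y z with hAyz
  set Axy := F x + F y + dist x y with hAxy
  set Azw := F z + F w + dist z w with hAzw
  have pAxz : 0 < Axz := by have := dist_nonneg (x := x) (y := z); rw [hAxz]; linarith
  have pAyw : 0 < Ayw := by have := dist_nonneg (x := y) (y := w); rw [hAyw]; linarith
  have pAxw : 0 < Axw := by have := dist_nonneg (x := x) (y := w); rw [hAxw]; linarith
  have pAyz : 0 < Ayz := by have := dist_nonneg (x := y) (y := z); rw [hAyz]; linarith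
  have pAxy : 0 < Axy := by have := dist_nonneg (x := x) (y := y); rw [hAxy]; linarith
  have pAzw : 0 < Azw := by have := dist_nonneg (x := z) (y := w); rw [hAzw]; linarith
  have t1 : Axz ≤ Axy + Ayz := by
    have := dist_triangle x y z
    rw [hAxz, hAxy, hAyz]; linarith
  have t2 : Axz ≤ Axw + Azw := by
    have := dist_triangle x w z
    have hc : dist w z = dist z w := dist_comm w z
    rw [hAxz, hAxw, hAzw]; linarith
  have t3 : Ayw ≤ Axy + Axw := by
    have := dist_triangle y x w
    have hc : dist y x = dist x y := dist_comm y x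
    rw [hAyw, hAxy, hAxw]; linarith
  have t4 : Ayw ≤ Ayz + Azw := by
    have := dist_triangle y z w
    rw [hAyw, hAyz, hAzw]; linarith
  have hprod : Axz * Ayw ≤ 9 * max (Axw * Ayz) (Axy * Azw) :=
    key9 Axy Ayz Azw Axw Axz Ayw pAxy pAyz pAzw pAxw pAyw t1 t2 t3 t4
  have hmain : Real.log Axz + Real.log Ayw ≤
      max (Real.log Axw + Real.log Ayz) (Real.log Axy + Real.log Azw) + Real.log 9 := by
    rcases le_total (Axw * Ayz) (Axy * Azw) with h | h
    · have h9 : Axz * Ayw ≤ 9 * (Axy * Azw) := by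
        rw [max_eq_right h] at hprod; exact hprod
      have := Real.log_le_log (by positivity) h9
      rw [Real.log_mul pAxz.ne' pAyw.ne', Real.log_mul (by norm_num : (9:ℝ) ≠ 0)
        (by positivity), Real.log_mul pAxy.ne' pAzw.ne'] at this
      have hm := le_max_right (Real.log Axw + Real.log Ayz) (Real.log Axy + Real.log Azw)
      linarith
    · have h9 : Axz * Ayw ≤ 9 * (Axw * Ayz) := by
        rw [max_eq_left h] at hprod; exact hprod
      have := Real.log_le_log (by positivity) h9
      rw [Real.log_mul pAxz.ne' pAyw.ne', Real.log_mul (by norm_num : (9:ℝ) ≠ 0)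
        (by positivity), Real.log_mul pAxw.ne' pAyz.ne'] at this
      have hm := le_max_left (Real.log Axw + Real.log Ayz) (Real.log Axy + Real.log Azw)
      linarith
  have exz := expand x z hFx hFz
  have eyw := expand y w hFy hFw
  have exw := expand x w hFx hFw
  have eyz := expand y z hFy hFz
  have exy := expand x y hFx hFy
  have ezw := expand z w hFz hFw
  rcases le_total (Real.log Axw + Real.log Ayz) (Real.log Axy + Real.log Azw) with h | h
  · rw [max_eq_right h] at hmain
    rw [max_eq_right (show iNA F x w + iNA F y z ≤ iNA F x y + iNA F z w by
      rw [exw, eyz, exy, ezw]; linarith)]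
    rw [exz, eyw, exy, ezw]; linarith
  · rw [max_eq_left h] at hmain
    rw [max_eq_left (show iNA F x y + iNA F z w ≤ iNA F x w + iNA F y z by
      rw [exw, eyz, exy, ezw]; linarith)]
    rw [exz, eyw, exw, eyz]; linarith
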